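/- arXiv:2402.08283 — 3 statements merged into one kernel-verified Lean document; each statement's English description precedes it below -/
import Mathlib

section
/- Let J ≥ 2 classes have elliptically symmetric densities on ℝ^d of the form f_j(x) = C_j |det Σ_j|^{-1/2} φ_j(δ_j(x)) for j = 1,…,J, where C_j > 0, Σ_j is positive definite, φ_j : ℝ≥0 → ℝ>0, and δ_j(x) = ((x−μ_j)ᵀ Σ_j^{-1} (x−μ_j))^{1/2}. Let π_1,…,π_J > 0 with Σ_j π_j = 1 be prior probabilities and define the posterior probabilities p(j | x) = π_j f_j(x) / Σ_{k=1}^J π_k f_k(x). Then there exist functions g_{jk} : ℝ → ℝ (1 ≤ j ≤ J−1, 1 ≤ k ≤ J) such that, writing g_j(x) = Σ_{k=1}^J g_{jk}(δ_k(x)), one has p(j | x) = exp(g_j(x)) / (1 + Σ_{k=1}^{J−1} exp(g_k(x))) for j = 1,…,J−1 and p(J | x) = 1 / (1 + Σ_{k=1}^{J−1} exp(g_k(x))) for every x ∈ ℝ^d. -/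
open MeasureTheory Matrix Real
open scoped BigOperators

noncomputable section

/-!
Each numerator `πⱼ fⱼ(x)` is a positive function `hⱼ` of the single distance `δⱼ(x)`. Dividing
numerator and denominator of the posterior by the positive term of class `J` writes
`p(j | x)` as `exp ηⱼ / (1 + ∑_{k < J} exp ηₖ)` with log-odds `ηⱼ = log hⱼ(δⱼ x) - log h_J(δ_J x)`,
which is a sum of a function of `δⱼ(x)` and a function of `δ_J(x)`; for `j = J` it vanishes.
-/

section LogOdds

variable {ι : Type*} [Fintype ι] [DecidableEq ι]

theorem div_sum_eq_exp_log_sub_div_one_add_sum {a : ι → ℝ} (ha : ∀ k, 0 < a k) (L j : ι) :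
    a j / ∑ k, a k =
      exp (log (a j) - log (a L)) /
        (1 + ∑ k ∈ Finset.univ.erase L, exp (log (a k) - log (a L))) := by
  have hratio : ∀ k, exp (log (a k) - log (a L)) = a k / a L := fun k => by
    rw [exp_sub, exp_log (ha k), exp_log (ha L)]
  have hL : a L ≠ 0 := (ha L).ne'
  simp only [hratio]
  rw [← Finset.sum_div, ← div_self hL, ← add_div, Finset.add_sum_erase _ _ (Finset.mem_univ L),
    div_div_div_cancel_right₀ hL]

def logOddsComponent (h : ι → ℝ → ℝ) (L j k : ι) (t : ℝ) : ℝ :=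
  (if k = j then log (h j t) else 0) - (if k = L then log (h L t) else 0)

theorem sum_logOddsComponent (h : ι → ℝ → ℝ) (L j : ι) (δ : ι → ℝ) :
    ∑ k, logOddsComponent h L j k (δ k) = log (h j (δ j)) - log (h L (δ L)) := by
  simp only [logOddsComponent, Finset.sum_sub_distrib, Finset.sum_ite_eq', Finset.mem_univ,
    if_true]

end LogOdds

theorem ellipticDensity_pos {n : Type*} [Fintype n] [DecidableEq n] {S : Matrix n n ℝ}
    (hS : S.PosDef) {c y : ℝ} (hc : 0 < c) (hy : 0 < y) : 0 < c * |S.det| ^ (-(1 : ℝ) / 2) * y := by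
  have hdet : 0 < |S.det| ^ (-(1 : ℝ) / 2) := rpow_pos_of_pos (abs_pos.mpr hS.det_pos.ne') _
  positivity

theorem posterior_GAM_of_elliptic_general
    (d J : ℕ)
    (μ : Fin J → EuclideanSpace ℝ (Fin d))
    (Sg : Fin J → Matrix (Fin d) (Fin d) ℝ)
    (hSg : ∀ j, (Sg j).PosDef)
    (C : Fin J → ℝ) (hC : ∀ j, 0 < C j)
    (φ : Fin J → ℝ → ℝ) (hφ : ∀ j t, 0 ≤ t → 0 < φ j t)
    (δ : Fin J → EuclideanSpace ℝ (Fin d) → ℝ)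
    (hδ : ∀ j x, δ j x = Real.sqrt ((x - μ j) ⬝ᵥ (Sg j)⁻¹.mulVec (x - μ j)))
    (f : Fin J → EuclideanSpace ℝ (Fin d) → ℝ)
    (hf : ∀ j x, f j x = C j * |(Sg j).det| ^ (-(1 : ℝ) / 2) * φ j (δ j x))
    (prior : Fin J → ℝ) (hprior : ∀ j, 0 < prior j)
    (p : Fin J → EuclideanSpace ℝ (Fin d) → ℝ)
    (hp : ∀ j x, p j x = prior j * f j x / ∑ k, prior k * f k x)
    -- the distinguished "last" class
    (L : Fin J) :
    ∃ g : Fin J → Fin J → ℝ → ℝ,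
      ∀ x : EuclideanSpace ℝ (Fin d),
        (∀ j, j ≠ L →
          p j x = Real.exp (∑ k, g j k (δ k x)) /
            (1 + ∑ k ∈ Finset.univ.erase L, Real.exp (∑ k', g k k' (δ k' x)))) ∧
        p L x =
          1 / (1 + ∑ k ∈ Finset.univ.erase L, Real.exp (∑ k', g k k' (δ k' x))) := by
  let h : Fin J → ℝ → ℝ := fun k t => prior k * (C k * |(Sg k).det| ^ (-(1 : ℝ) / 2) * φ k t)
  have hnum : ∀ k x, prior k * f k x = h k (δ k x) := fun k x => by rw [hf]
  have hpos : ∀ k x, 0 < h k (δ k x) := fun k x =>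
    mul_pos (hprior k) (ellipticDensity_pos (hSg k) (hC k)
      (hφ k _ (by rw [hδ]; exact sqrt_nonneg _)))
  refine ⟨logOddsComponent h L, fun x => ?_⟩
  have hposterior : ∀ j, p j x = exp (∑ k, logOddsComponent h L j k (δ k x)) /
      (1 + ∑ k ∈ Finset.univ.erase L, exp (∑ k', logOddsComponent h L k k' (δ k' x))) := by
    intro j
    simp only [hp, hnum, sum_logOddsComponent]
    exact div_sum_eq_exp_log_sub_div_one_add_sum (fun k => hpos k x) L j
  refine ⟨fun j _ => hposterior j, ?_⟩
  rw [hposterior L, sum_logOddsComponent, sub_self, exp_zero]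

/-- If the densities of `J ≥ 2` competing classes are elliptically
symmetric, `f j x = C j * |det Σ j| ^ (-1/2) * φ j (δ j x)` where
`δ j x = ((x - μ j)ᵀ (Σ j)⁻¹ (x - μ j))^(1/2)` is the Mahalanobis distance, then the
posterior probabilities `p j x = prior j * f j x / ∑ k, prior k * f k x` satisfy an additive
logistic regression model in the Mahalanobis distances `δ 1 x, …, δ J x`. -/
theorem posterior_GAM_of_elliptic
    (d J : ℕ) (hJ : 2 ≤ J)
    (μ : Fin J → EuclideanSpace ℝ (Fin d))
    (Sg : Fin J → Matrix (Fin d) (Fin d) ℝ)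
    (hSg : ∀ j, (Sg j).PosDef)
    (C : Fin J → ℝ) (hC : ∀ j, 0 < C j)
    (φ : Fin J → ℝ → ℝ) (hφ : ∀ j t, 0 ≤ t → 0 < φ j t)
    (δ : Fin J → EuclideanSpace ℝ (Fin d) → ℝ)
    (hδ : ∀ j x, δ j x = Real.sqrt ((x - μ j) ⬝ᵥ (Sg j)⁻¹.mulVec (x - μ j)))
    (f : Fin J → EuclideanSpace ℝ (Fin d) → ℝ)
    (hf : ∀ j x, f j x = C j * |(Sg j).det| ^ (-(1 : ℝ) / 2) * φ j (δ j x))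
    (prior : Fin J → ℝ) (hprior : ∀ j, 0 < prior j) (hprior1 : ∑ j, prior j = 1)
    (p : Fin J → EuclideanSpace ℝ (Fin d) → ℝ)
    (hp : ∀ j x, p j x = prior j * f j x / ∑ k, prior k * f k x)
    -- the distinguished "last" class
    (L : Fin J) (hL : (L : ℕ) = J - 1) :
    ∃ g : Fin J → Fin J → ℝ → ℝ,
      ∀ x : EuclideanSpace ℝ (Fin d),
        (∀ j, j ≠ L →
          p j x = Real.exp (∑ k, g j k (δ k x)) /
            (1 + ∑ k ∈ Finset.univ.erase L, Real.exp (∑ k', g k k' (δ k' x)))) ∧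
        p L x =
          1 / (1 + ∑ k ∈ Finset.univ.erase L, Real.exp (∑ k', g k k' (δ k' x))) :=
  posterior_GAM_of_elliptic_general d J μ Sg hSg C hC φ hφ δ hδ f hf prior hprior p hp L

end
end

section
/- Let X be a random vector in ℝ^d with mean μ and positive definite covariance matrix Σ. Let Ψ : ℝ≥0 → ℝ≥0 be decreasing and define the kernel K : ℝ^d → ℝ≥0 by K(t) = Ψ(tᵀt), and assume K is continuous at 0. For h > 0 define β_h(x) = E[ K(Σ^{-1/2}(x − X)/h) · (x − X)ᵀ Σ^{-1} (x − X) ]. Then for every x ∈ ℝ^d, β_h(x) → K(0) · ((x − μ)ᵀ Σ^{-1} (x − μ) + d) as h → ∞. -/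
open MeasureTheory Matrix Real Filter
open scoped BigOperators Topology MatrixOrder

noncomputable section

/-- Let `X` be a random vector in `ℝ^d` with mean `μ` and positive
definite covariance `Σ`, let `K t = Ψ (tᵀ t)` with `Ψ : ℝ≥0 → ℝ≥0` decreasing and `K`
continuous at `0`, and let
`β h x = E[K(Σ^{-1/2}(x − X)/h) ⬝ (x − X)ᵀ Σ⁻¹ (x − X)]`.
Then `β h x → K 0 * ((x − μ)ᵀ Σ⁻¹ (x − μ) + d)` as `h → ∞`. -/
theorem beta_tendsto_of_h_tendsto_atTop
    {Ω : Type*} [MeasurableSpace Ω] (P : Measure Ω) [IsProbabilityMeasure P]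
    (d : ℕ) (X : Ω → EuclideanSpace ℝ (Fin d)) (hX : Measurable X)
    (hmom2 : Integrable (fun ω => ‖X ω‖ ^ 2) P)
    (μ : EuclideanSpace ℝ (Fin d)) (hμ : ∀ a, μ a = ∫ ω, X ω a ∂P)
    (Sg : Matrix (Fin d) (Fin d) ℝ) (hSg : Sg.PosDef)
    (hcov : ∀ a b, Sg a b = ∫ ω, (X ω a - μ a) * (X ω b - μ b) ∂P)
    (Ψ : ℝ → ℝ) (hΨ_nonneg : ∀ t, 0 ≤ Ψ t) (hΨ_anti : AntitoneOn Ψ (Set.Ici 0))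
    (K : EuclideanSpace ℝ (Fin d) → ℝ) (hK : ∀ t, K t = Ψ (t ⬝ᵥ t))
    (hKcont : ContinuousAt K 0)
    -- `Rinv` is the inverse of the positive definite square root of `Σ`
    (Rinv : Matrix (Fin d) (Fin d) ℝ) (hRinv : Rinv = (CFC.sqrt Sg)⁻¹)
    (β : ℝ → EuclideanSpace ℝ (Fin d) → ℝ)
    (hβ : ∀ h x, β h x =
      ∫ ω, K (WithLp.toLp 2 (h⁻¹ • Rinv.mulVec (x - X ω))) *
        ((x - X ω) ⬝ᵥ Sg⁻¹.mulVec (x - X ω)) ∂P) :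
    ∀ x : EuclideanSpace ℝ (Fin d),
      Filter.Tendsto (fun h => β h x) Filter.atTop
        (nhds (K 0 * ((x - μ) ⬝ᵥ Sg⁻¹.mulVec (x - μ) + d))) := by
  intro x
  -- coordinate bound
  have hcoord : ∀ (y : EuclideanSpace ℝ (Fin d)) (a : Fin d), |y a| ≤ ‖y‖ := by
    intro y a
    rw [EuclideanSpace.norm_eq]
    rw [show |y a| = Real.sqrt (|y a| ^ 2) by rw [Real.sqrt_sq_eq_abs, abs_abs]]
    exact Real.sqrt_le_sqrt (Finset.single_le_sum (f := fun i => |y i| ^ 2)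
      (fun i _ => by positivity) (Finset.mem_univ a))
  -- coordinate measurability and integrability
  have hXa_meas : ∀ a, Measurable fun ω => X ω a := fun a =>
    (measurable_pi_apply a).comp ((WithLp.measurable_ofLp 2 _).comp hX)
  have hXa_int : ∀ a, Integrable (fun ω => X ω a) P := by
    intro a
    refine Integrable.mono' (hmom2.add (integrable_const 1))
      ((hXa_meas a).aestronglyMeasurable) (Filter.Eventually.of_forall fun ω => ?_)
    have h1 := hcoord (X ω) a
    have h2 : ‖X ω‖ ≤ ‖X ω‖ ^ 2 + 1 := by nlinarith [sq_nonneg (‖X ω‖ - 1)]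
    calc ‖X ω a‖ = |X ω a| := Real.norm_eq_abs _
      _ ≤ ‖X ω‖ := h1
      _ ≤ ‖X ω‖ ^ 2 + 1 := h2
  have hXab_int : ∀ a b, Integrable (fun ω => X ω a * X ω b) P := by
    intro a b
    refine Integrable.mono' hmom2 (((hXa_meas a).mul (hXa_meas b)).aestronglyMeasurable)
      (Filter.Eventually.of_forall fun ω => ?_)
    have ha := hcoord (X ω) a
    have hb := hcoord (X ω) b
    calc ‖X ω a * X ω b‖ = |X ω a| * |X ω b| := by rw [Real.norm_eq_abs, abs_mul]
      _ ≤ ‖X ω‖ * ‖X ω‖ := mul_le_mul ha hb (abs_nonneg _) (norm_nonneg _)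
      _ = ‖X ω‖ ^ 2 := (sq ‖X ω‖).symm
  have hint_u : ∀ a, Integrable (fun ω => X ω a - μ a) P := fun a =>
    (hXa_int a).sub (integrable_const _)
  have hmean : ∀ a, ∫ ω, (X ω a - μ a) ∂P = 0 := by
    intro a
    rw [integral_sub (hXa_int a) (integrable_const _), integral_const]
    simp [← hμ a]
  have huw_int : ∀ a b, Integrable (fun ω => (X ω a - μ a) * (X ω b - μ b)) P := by
    intro a b
    have heq : (fun ω => (X ω a - μ a) * (X ω b - μ b)) =
        fun ω => X ω a * X ω b - μ a * X ω b - (X ω a * μ b - μ a * μ b) := by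
      funext ω; ring
    rw [heq]
    exact ((hXab_int a b).sub ((hXa_int b).const_mul _)).sub
      (((hXa_int a).mul_const _).sub (integrable_const _))
  -- splitting identity
  have hsplit : ∀ (a b : Fin d) (ω : Ω), (x a - X ω a) * (x b - X ω b) =
      (x a - μ a) * (x b - μ b) - (x a - μ a) * (X ω b - μ b)
        - (X ω a - μ a) * (x b - μ b) + (X ω a - μ a) * (X ω b - μ b) := by
    intro a b ω; ring
  have hf_int : ∀ a b, Integrable (fun ω => (x a - X ω a) * (x b - X ω b)) P := by
    intro a b
    rw [funext (hsplit a b)]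
    exact (((integrable_const _).sub ((hint_u b).const_mul _)).sub
      ((hint_u a).mul_const _)).add (huw_int a b)
  have hf_val : ∀ a b, ∫ ω, (x a - X ω a) * (x b - X ω b) ∂P =
      (x a - μ a) * (x b - μ b) + Sg a b := by
    intro a b
    have hI1 : Integrable (fun ω =>
        (x a - μ a) * (x b - μ b) - (x a - μ a) * (X ω b - μ b)) P :=
      (integrable_const _).sub ((hint_u b).const_mul _)
    have hI2 : Integrable (fun ω =>
        (x a - μ a) * (x b - μ b) - (x a - μ a) * (X ω b - μ b)
          - (X ω a - μ a) * (x b - μ b)) P :=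
      hI1.sub ((hint_u a).mul_const _)
    rw [funext (hsplit a b)]
    rw [integral_add hI2 (huw_int a b)]
    rw [integral_sub hI1 ((hint_u a).mul_const _)]
    rw [integral_sub (integrable_const _) ((hint_u b).const_mul _)]
    rw [integral_const, integral_const_mul, integral_mul_const, hmean a, hmean b,
      ← hcov a b]
    simp
  -- coordinate evaluation of subtraction in EuclideanSpace
  have hsub : ∀ (y : EuclideanSpace ℝ (Fin d)) (a : Fin d), (x - y) a = x a - y a :=
    fun y a => rfl
  -- expansion of the quadratic form
  have hQ_eq : ∀ (y : EuclideanSpace ℝ (Fin d)),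
      (x - y) ⬝ᵥ Sg⁻¹.mulVec (x - y) =
      ∑ a, ∑ b, Sg⁻¹ a b * ((x a - y a) * (x b - y b)) := by
    intro y
    simp only [dotProduct, Matrix.mulVec, Finset.mul_sum]
    refine Finset.sum_congr rfl fun a _ => Finset.sum_congr rfl fun b _ => ?_
    rw [hsub y a, Pi.sub_apply]; ring
  have hQ_nonneg : ∀ ω : Ω, (0:ℝ) ≤ (x - X ω) ⬝ᵥ Sg⁻¹.mulVec (x - X ω) := by
    intro ω
    simpa using hSg.inv.posSemidef.re_dotProduct_nonneg (x - X ω)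
  have hQ_meas : Measurable fun ω => (x - X ω) ⬝ᵥ Sg⁻¹.mulVec (x - X ω) := by
    simp only [fun ω => hQ_eq (X ω)]
    refine Finset.measurable_sum _ fun a _ => Finset.measurable_sum _ fun b _ => ?_
    exact ((measurable_const.sub (hXa_meas a)).mul
      (measurable_const.sub (hXa_meas b))).const_mul _
  have hQ_int : Integrable (fun ω => (x - X ω) ⬝ᵥ Sg⁻¹.mulVec (x - X ω)) P := by
    simp only [fun ω => hQ_eq (X ω)]
    refine integrable_finset_sum _ fun a _ => integrable_finset_sum _ fun b _ => ?_
    exact (hf_int a b).const_mul _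
  -- symmetry of Sg and determinant
  have hsymm : ∀ a b, Sg b a = Sg a b := by
    intro a b; simpa using hSg.1.apply a b
  have hdet : IsUnit Sg.det := isUnit_iff_ne_zero.mpr hSg.det_pos.ne'
  have htrace : ∑ a, ∑ b, Sg⁻¹ a b * Sg a b = (d : ℝ) := by
    have h1 : ∑ a, ∑ b, Sg⁻¹ a b * Sg a b = Matrix.trace (Sg⁻¹ * Sg) := by
      simp only [Matrix.trace, Matrix.diag, Matrix.mul_apply]
      exact Finset.sum_congr rfl fun a _ => Finset.sum_congr rfl fun b _ => by
        rw [hsymm a b]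
    rw [h1, Matrix.nonsing_inv_mul Sg hdet, Matrix.trace_one]
    simp
  -- value of the integral of the quadratic form
  have hQ_val : ∫ ω, (x - X ω) ⬝ᵥ Sg⁻¹.mulVec (x - X ω) ∂P =
      (x - μ) ⬝ᵥ Sg⁻¹.mulVec (x - μ) + d := by
    simp only [fun ω => hQ_eq (X ω)]
    refine (integral_finset_sum _ fun a _ =>
      integrable_finset_sum _ fun b _ => (hf_int a b).const_mul _).trans ?_
    have h2 : ∀ a ∈ Finset.univ, ∫ ω, ∑ b, Sg⁻¹ a b * ((x a - X ω a) * (x b - X ω b)) ∂P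
        = ∑ b, Sg⁻¹ a b * ((x a - μ a) * (x b - μ b) + Sg a b) := by
      intro a _
      rw [integral_finset_sum _ fun b _ => (hf_int a b).const_mul _]
      exact Finset.sum_congr rfl fun b _ => by rw [integral_const_mul, hf_val a b]
    rw [Finset.sum_congr rfl h2, hQ_eq μ]
    rw [← htrace, ← Finset.sum_add_distrib]
    refine Finset.sum_congr rfl fun a _ => ?_
    rw [← Finset.sum_add_distrib]
    exact Finset.sum_congr rfl fun b _ => by ring
  -- facts about K
  have hzero_dot : ((0 : EuclideanSpace ℝ (Fin d)) ⬝ᵥ (0 : EuclideanSpace ℝ (Fin d))) = 0 := by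
    show ((0 : Fin d → ℝ) ⬝ᵥ (0 : Fin d → ℝ)) = 0
    simp
  have hdot_nonneg : ∀ t : EuclideanSpace ℝ (Fin d), (0:ℝ) ≤ t ⬝ᵥ t := by
    intro t
    show (0:ℝ) ≤ ∑ i, t i * t i
    exact Finset.sum_nonneg fun i _ => mul_self_nonneg _
  have hK_nonneg : ∀ t, 0 ≤ K t := fun t => (hK t).symm ▸ hΨ_nonneg _
  have hK_le : ∀ t, K t ≤ K 0 := by
    intro t
    rw [hK t, hK 0, hzero_dot]
    exact hΨ_anti (Set.mem_Ici.mpr le_rfl) (Set.mem_Ici.mpr (hdot_nonneg t)) (hdot_nonneg t)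
  -- measurable version of K
  have hg_anti : Antitone (fun s : ℝ => Ψ (max s 0)) := by
    intro s t hst
    exact hΨ_anti (Set.mem_Ici.mpr (le_max_right s 0)) (Set.mem_Ici.mpr (le_max_right t 0))
      (max_le_max hst le_rfl)
  have hg_meas : Measurable (fun s : ℝ => Ψ (max s 0)) := hg_anti.measurable
  have hKg : ∀ t : EuclideanSpace ℝ (Fin d), K t = Ψ (max (t ⬝ᵥ t) 0) := by
    intro t
    rw [hK t, max_eq_left (hdot_nonneg t)]
  -- measurability of the kernel factor
  have hw_meas : ∀ i, Measurable fun ω => Rinv.mulVec (x - X ω) i := by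
    intro i
    show Measurable fun ω => ∑ b, Rinv i b * (x b - X ω b)
    exact Finset.measurable_sum _ fun b _ =>
      (measurable_const.sub (hXa_meas b)).const_mul _
  have hmK : ∀ h : ℝ, Measurable fun ω =>
      K (WithLp.toLp 2 ((h : ℝ)⁻¹ • Rinv.mulVec (x - X ω))) := by
    intro h
    simp only [hKg]
    refine hg_meas.comp ?_
    show Measurable fun ω =>
      ∑ i, (h⁻¹ * Rinv.mulVec (x - X ω) i) * (h⁻¹ * Rinv.mulVec (x - X ω) i)
    exact Finset.measurable_sum _ fun i _ =>
      ((hw_meas i).const_mul _).mul ((hw_meas i).const_mul _)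
  -- dominated convergence
  have key := tendsto_integral_filter_of_dominated_convergence
    (μ := P) (l := atTop)
    (F := fun h ω => K (WithLp.toLp 2 ((h : ℝ)⁻¹ • Rinv.mulVec (x - X ω))) *
      ((x - X ω) ⬝ᵥ Sg⁻¹.mulVec (x - X ω)))
    (f := fun ω => K 0 * ((x - X ω) ⬝ᵥ Sg⁻¹.mulVec (x - X ω)))
    (bound := fun ω => K 0 * ((x - X ω) ⬝ᵥ Sg⁻¹.mulVec (x - X ω)))
    (Filter.Eventually.of_forall fun h => ((hmK h).mul hQ_meas).aestronglyMeasurable)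
    (Filter.Eventually.of_forall fun h => ae_of_all _ fun ω => by
      rw [Real.norm_eq_abs, abs_mul, abs_of_nonneg (hK_nonneg _),
        abs_of_nonneg (hQ_nonneg ω)]
      exact mul_le_mul_of_nonneg_right (hK_le _) (hQ_nonneg ω))
    (hQ_int.const_mul _)
    (ae_of_all _ fun ω => by
      have h1 : Tendsto (fun h : ℝ => h⁻¹) atTop (𝓝 (0:ℝ)) := tendsto_inv_atTop_zero
      have h0 : Tendsto (fun h : ℝ =>
          (WithLp.toLp 2 (h⁻¹ • Rinv.mulVec (x - X ω)) : EuclideanSpace ℝ (Fin d))) atTop (𝓝 0) := by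
        have := h1.smul_const (X := EuclideanSpace ℝ (Fin d)) (WithLp.toLp 2 (Rinv.mulVec (x - X ω)))
        simpa using this
      exact (hKcont.tendsto.comp h0).mul_const _)
  rw [integral_const_mul, hQ_val] at key
  simpa only [hβ] using key

end
end

section
/- Let A and Â be symmetric d×d real matrices with A positive semidefinite, and let μ, μ̂, x ∈ ℝ^d. Then |(x − μ̂)ᵀ Â (x − μ̂) − (x − μ)ᵀ A (x − μ)| ≤ ‖Â − A‖_F · ‖x − μ̂‖² + λ_max(A) · ‖μ̂ − μ‖ · (2‖x‖ + ‖μ̂‖ + ‖μ‖), where λ_max(A) is the largest eigenvalue of A and ‖·‖_F is the Frobenius norm. -/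
/-!
With `u = x - μ̂` and `v = x - μ`, the difference of the quadratic forms is
`uᵀ(Â - A)u + (u - v)ᵀAu + vᵀA(u - v)`. The first term is at most `‖Â - A‖_F ‖u‖²` by
Cauchy–Schwarz over the `d²` entries. For the other two, `A` acts diagonally on an orthonormal
eigenbasis with eigenvalues in `[0, λ_max(A)]`, so `‖A w‖ ≤ λ_max(A) ‖w‖`; it remains to use
`‖u - v‖ = ‖μ̂ - μ‖` and `‖u‖ + ‖v‖ ≤ 2‖x‖ + ‖μ̂‖ + ‖μ‖`.
-/

open Matrix Real
open scoped BigOperators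

noncomputable section

/-- The Frobenius norm of a real matrix. -/
def frobNorm {d : ℕ} (A : Matrix (Fin d) (Fin d) ℝ) : ℝ :=
  Real.sqrt (∑ i, ∑ j, (A i j) ^ 2)

theorem abs_dotProduct_mulVec_le_frobNorm {d : ℕ} (M : Matrix (Fin d) (Fin d) ℝ)
    (w v : EuclideanSpace ℝ (Fin d)) : |w ⬝ᵥ M *ᵥ v| ≤ frobNorm M * (‖w‖ * ‖v‖) := by
  have hsum : w ⬝ᵥ M *ᵥ v = ∑ p : Fin d × Fin d, M p.1 p.2 * (w p.1 * v p.2) := by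
    simp only [dotProduct, mulVec, Fintype.sum_prod_type, Finset.mul_sum]
    exact Finset.sum_congr rfl fun i _ => Finset.sum_congr rfl fun j _ => by ring
  have hsq : ∑ p : Fin d × Fin d, (w p.1 * v p.2) ^ 2 = (‖w‖ * ‖v‖) ^ 2 := by
    simp only [mul_pow, EuclideanSpace.real_norm_sq_eq, Fintype.sum_prod_type, Finset.sum_mul_sum]
  calc |w ⬝ᵥ M *ᵥ v| ≤ √((∑ p : Fin d × Fin d, M p.1 p.2 ^ 2) * (‖w‖ * ‖v‖) ^ 2) := by
        rw [hsum, ← hsq]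
        exact Real.abs_le_sqrt (Finset.sum_mul_sq_le_sq_mul_sq _ _ _)
    _ = frobNorm M * (‖w‖ * ‖v‖) := by
        rw [Real.sqrt_mul (by positivity), Real.sqrt_sq (by positivity), frobNorm,
          Fintype.sum_prod_type]

theorem LinearMap.IsSymmetric.norm_apply_le_of_abs_eigenvalues_le {𝕜 E : Type*} [RCLike 𝕜]
    [NormedAddCommGroup E] [InnerProductSpace 𝕜 E] [FiniteDimensional 𝕜 E] {T : E →ₗ[𝕜] E}
    {n : ℕ} (hT : T.IsSymmetric) (hn : Module.finrank 𝕜 E = n) {L : ℝ} (hL0 : 0 ≤ L)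
    (hL : ∀ i, |hT.eigenvalues hn i| ≤ L) (v : E) : ‖T v‖ ≤ L * ‖v‖ := by
  set b := hT.eigenvectorBasis hn
  have hsq : ‖T v‖ ^ 2 ≤ (L * ‖v‖) ^ 2 := by
    rw [← b.repr.norm_map (T v), ← b.repr.norm_map v, mul_pow, EuclideanSpace.norm_sq_eq,
      EuclideanSpace.norm_sq_eq, Finset.mul_sum]
    gcongr with i
    rw [hT.eigenvectorBasis_apply_self_apply, norm_mul, mul_pow, RCLike.norm_ofReal]
    gcongr
    exact hL i
  exact (pow_le_pow_iff_left₀ (norm_nonneg _) (by positivity) two_ne_zero).mp hsq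

theorem Matrix.PosSemidef.abs_dotProduct_mulVec_le {n : Type*} [Fintype n] [DecidableEq n]
    {A : Matrix n n ℝ} (hA : A.PosSemidef) (w v : EuclideanSpace ℝ n) :
    |w ⬝ᵥ A *ᵥ v| ≤ (⨆ i, hA.1.eigenvalues i) * (‖w‖ * ‖v‖) := by
  set L := ⨆ i, hA.1.eigenvalues i
  have hT := isSymmetric_toEuclideanLin_iff.mpr hA.1
  have hAv : ‖toEuclideanLin A v‖ ≤ L * ‖v‖ := by
    refine hT.norm_apply_le_of_abs_eigenvalues_le finrank_euclideanSpace
      (Real.iSup_nonneg hA.eigenvalues_nonneg) (fun j => ?_) v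
    -- `hA.1.eigenvalues` is defined as a reindexing of the eigenvalues of `toEuclideanLin A`
    obtain ⟨i, rfl⟩ := (Fintype.equivOfCardEq (Fintype.card_fin _)).symm.surjective j
    change |hA.1.eigenvalues i| ≤ L
    rw [abs_of_nonneg (hA.eigenvalues_nonneg i)]
    exact le_ciSup (Set.finite_range _).bddAbove i
  calc |w ⬝ᵥ A *ᵥ v| = |inner ℝ w (toEuclideanLin A v)| := by
        rw [EuclideanSpace.inner_eq_star_dotProduct, star_trivial, dotProduct_comm]; rfl
    _ ≤ ‖w‖ * ‖toEuclideanLin A v‖ := abs_real_inner_le_norm _ _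
    _ ≤ ‖w‖ * (L * ‖v‖) := by gcongr
    _ = L * (‖w‖ * ‖v‖) := by ring

theorem Matrix.dotProduct_mulVec_sub_dotProduct_mulVec {n R : Type*} [Fintype n] [CommRing R]
    (A B : Matrix n n R) (u v : n → R) :
    u ⬝ᵥ B *ᵥ u - v ⬝ᵥ A *ᵥ v
      = u ⬝ᵥ (B - A) *ᵥ u + (u - v) ⬝ᵥ A *ᵥ u + v ⬝ᵥ A *ᵥ (u - v) := by
  simp only [sub_mulVec, mulVec_sub, dotProduct_sub, sub_dotProduct]
  ring

theorem quadratic_form_perturbation_bound_general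
    (d : ℕ) (A Ahat : Matrix (Fin d) (Fin d) ℝ)
    (hA : A.PosSemidef)
    (μ muHat x : EuclideanSpace ℝ (Fin d)) :
    |(x - muHat) ⬝ᵥ Ahat.mulVec (x - muHat) - (x - μ) ⬝ᵥ A.mulVec (x - μ)|
      ≤ frobNorm (Ahat - A) * ‖x - muHat‖ ^ 2
        + (⨆ i, hA.1.eigenvalues i) * ‖muHat - μ‖ * (2 * ‖x‖ + ‖muHat‖ + ‖μ‖) := by
  have hδ : (x - muHat).ofLp - (x - μ).ofLp = (μ - muHat).ofLp := by
    rw [← WithLp.ofLp_sub, sub_sub_sub_cancel_left]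
  -- the `mulVec` arguments elaborate as `x.ofLp - muHat.ofLp`
  simp only [← WithLp.ofLp_sub]
  rw [dotProduct_mulVec_sub_dotProduct_mulVec, hδ]
  have hF := abs_dotProduct_mulVec_le_frobNorm (Ahat - A) (x - muHat) (x - muHat)
  have h₁ := hA.abs_dotProduct_mulVec_le (μ - muHat) (x - muHat)
  have h₂ := hA.abs_dotProduct_mulVec_le (x - μ) (μ - muHat)
  have hnorms : ‖x - muHat‖ + ‖x - μ‖ ≤ 2 * ‖x‖ + ‖muHat‖ + ‖μ‖ := by
    linarith [norm_sub_le x muHat, norm_sub_le x μ]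
  have hL : 0 ≤ (⨆ i, hA.1.eigenvalues i) * ‖muHat - μ‖ :=
    mul_nonneg (Real.iSup_nonneg hA.eigenvalues_nonneg) (norm_nonneg _)
  rw [← sq] at hF
  rw [norm_sub_rev μ muHat] at h₁ h₂
  refine (abs_add_three _ _ _).trans ?_
  linarith [mul_le_mul_of_nonneg_left hnorms hL]

/-- For symmetric `d×d` matrices `A` (positive semidefinite) and `Â`,
and vectors `μ, μ̂, x ∈ ℝ^d`,
`|(x − μ̂)ᵀ Â (x − μ̂) − (x − μ)ᵀ A (x − μ)|
  ≤ ‖Â − A‖_F ⬝ ‖x − μ̂‖² + λ_max(A) ⬝ ‖μ̂ − μ‖ ⬝ (2‖x‖ + ‖μ̂‖ + ‖μ‖)`. -/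
theorem quadratic_form_perturbation_bound
    (d : ℕ) (A Ahat : Matrix (Fin d) (Fin d) ℝ)
    (hA_symm : A.IsSymm) (hAhat_symm : Ahat.IsSymm)
    (hA : A.PosSemidef)
    (μ muHat x : EuclideanSpace ℝ (Fin d)) :
    |(x - muHat) ⬝ᵥ Ahat.mulVec (x - muHat) - (x - μ) ⬝ᵥ A.mulVec (x - μ)|
      ≤ frobNorm (Ahat - A) * ‖x - muHat‖ ^ 2
        + (⨆ i, hA.1.eigenvalues i) * ‖muHat - μ‖ * (2 * ‖x‖ + ‖muHat‖ + ‖μ‖) :=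
  quadratic_form_perturbation_bound_general d A Ahat hA μ muHat x

end
end
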